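/- Let N ≥ 5 and let ψ_ε = ξ U_ε be the truncated Aubin–Talenti bubble. Then as ε → 0^+, ∫ ψ_ε^2 log(ψ_ε^2) dx = C_1 ε^2 |log ε| + O(ε^2) for some positive constant C_1. -/
import Mathlib


open MeasureTheory Filter Topology Asymptotics

/-- The Aubin–Talenti bubble with parameter `ε > 0`. -/
noncomputable def bubble (N : ℕ) (ε : ℝ) (x : EuclideanSpace ℝ (Fin N)) : ℝ :=
  ((N : ℝ) * ((N : ℝ) - 2) * ε ^ 2) ^ (((N : ℝ) - 2) / 4) /
    (ε ^ 2 + ‖x‖ ^ 2) ^ (((N : ℝ) - 2) / 2)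

lemma aux_log_le_rpow {x c : ℝ} (hx : 0 < x) (hc : 0 < c) :
    Real.log x ≤ c⁻¹ * x ^ c := by
  have h2 : c * Real.log x ≤ x ^ c := by
    rw [← Real.log_rpow hx]
    linarith [Real.log_le_sub_one_of_pos (Real.rpow_pos_of_pos hx c)]
  calc Real.log x = c⁻¹ * (c * Real.log x) := by field_simp
    _ ≤ c⁻¹ * x ^ c := mul_le_mul_of_nonneg_left h2 (by positivity)

lemma aux_integrable (N : ℕ) {r : ℝ} (h : (N : ℝ) < 2 * r) :
    Integrable (fun y : EuclideanSpace ℝ (Fin N) => (1 + ‖y‖ ^ 2) ^ (-r)) := by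
  have h' : (Module.finrank ℝ (EuclideanSpace ℝ (Fin N)) : ℝ) < 2 * r := by
    rw [finrank_euclideanSpace_fin]; exact h
  have := integrable_rpow_neg_one_add_norm_sq
    (E := EuclideanSpace ℝ (Fin N)) (μ := volume) h'
  have e : -(2 * r) / 2 = -r := by ring
  simpa [e] using this

lemma aux_abs_mul_log_le_one {u : ℝ} (h0 : 0 ≤ u) (h1 : u ≤ 1) :
    |u * Real.log u| ≤ 1 := by
  rcases eq_or_lt_of_le h0 with h | h
  · simp [← h]
  · have := Real.abs_log_mul_self_lt u h h1
    rw [mul_comm] at this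
    linarith [this]

lemma aux_bubble_sq (N : ℕ) (hN : 5 ≤ N) {ε : ℝ} (hε : 0 < ε)
    (y : EuclideanSpace ℝ (Fin N)) :
    (bubble N ε (ε • y)) ^ 2 =
      ((N : ℝ) * ((N : ℝ) - 2)) ^ (((N : ℝ) - 2) / 2) * (ε ^ (N - 2))⁻¹ *
        (1 + ‖y‖ ^ 2) ^ (-((N : ℝ) - 2)) := by
  have h2 : (5:ℝ) ≤ (N:ℝ) := by exact_mod_cast hN
  have hbase : (0:ℝ) ≤ (N:ℝ) * ((N:ℝ) - 2) := by nlinarith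
  have hy : (0:ℝ) < 1 + ‖y‖ ^ 2 := by positivity
  have hεy : ε ^ 2 + ‖ε • y‖ ^ 2 = ε ^ 2 * (1 + ‖y‖ ^ 2) := by
    rw [norm_smul, Real.norm_eq_abs, mul_pow, sq_abs]; ring
  have hcast : ((N - 2 : ℕ) : ℝ) = (N:ℝ) - 2 := by
    push_cast [Nat.cast_sub (by omega : 2 ≤ N)]; ring
  unfold bubble
  rw [hεy, div_pow,
    ← Real.rpow_natCast ((((N:ℝ) * ((N:ℝ) - 2) * ε ^ 2)) ^ (((N:ℝ) - 2)/4)) 2,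
    ← Real.rpow_natCast (((ε ^ 2 * (1 + ‖y‖ ^ 2))) ^ (((N:ℝ) - 2)/2)) 2,
    ← Real.rpow_mul (by positivity), ← Real.rpow_mul (by positivity)]
  push_cast
  rw [show ((N:ℝ) - 2)/4 * 2 = ((N:ℝ) - 2)/2 by ring,
      show ((N:ℝ) - 2)/2 * 2 = (N:ℝ) - 2 by ring]
  rw [Real.mul_rpow hbase (sq_nonneg ε), Real.mul_rpow (sq_nonneg ε) hy.le]
  have e1 : (ε ^ 2 : ℝ) ^ (((N:ℝ) - 2)/2) = ε ^ ((N:ℝ) - 2) := by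
    rw [← Real.rpow_natCast ε 2, ← Real.rpow_mul hε.le]; push_cast
    rw [show (2:ℝ) * (((N:ℝ) - 2)/2) = (N:ℝ) - 2 by ring]
  have e2 : (ε ^ 2 : ℝ) ^ ((N:ℝ) - 2) = ε ^ (2 * ((N:ℝ) - 2)) := by
    rw [← Real.rpow_natCast ε 2, ← Real.rpow_mul hε.le]; push_cast; ring_nf
  have e3 : (ε ^ (N - 2 : ℕ) : ℝ) = ε ^ ((N:ℝ) - 2) := by
    rw [← Real.rpow_natCast ε (N - 2), hcast]
  rw [e1, e2, e3, Real.rpow_neg hy.le]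
  rw [div_eq_mul_inv, mul_inv, ← mul_assoc]
  congr 1
  rw [mul_assoc, mul_comm (ε ^ ((N:ℝ) - 2))]
  congr 1
  rw [← Real.rpow_neg hε.le, ← Real.rpow_add hε, ← Real.rpow_neg hε.le]
  ring_nf

/-- Positivity of the bubble. -/
lemma aux_bubble_pos (N : ℕ) (hN : 5 ≤ N) {ε : ℝ} (hε : 0 < ε)
    (x : EuclideanSpace ℝ (Fin N)) : 0 < bubble N ε x := by
  have h2 : (5:ℝ) ≤ (N:ℝ) := by exact_mod_cast hN
  have hden : (0:ℝ) < ε ^ 2 + ‖x‖ ^ 2 :=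
    add_pos_of_pos_of_nonneg (pow_pos hε 2) (by positivity)
  have hnum : (0:ℝ) < (N:ℝ) * ((N:ℝ) - 2) * ε ^ 2 := by
    have : (0:ℝ) < (N:ℝ) * ((N:ℝ) - 2) := by nlinarith
    exact mul_pos this (pow_pos hε 2)
  exact div_pos (Real.rpow_pos_of_pos hnum _) (Real.rpow_pos_of_pos hden _)

/-- The pointwise identity after rescaling. -/
lemma aux_pointwise (N : ℕ) (hN : 5 ≤ N) {ε : ℝ} (hε0 : 0 < ε) (hε1 : ε < 1)
    {t : ℝ} (ht : 0 ≤ t) (y : EuclideanSpace ℝ (Fin N)) :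
    (ε : ℝ) ^ (N - 2) *
        ((t * bubble N ε (ε • y)) ^ 2 * Real.log ((t * bubble N ε (ε • y)) ^ 2)) =
      ((N : ℝ) * ((N : ℝ) - 2)) ^ (((N : ℝ) - 2) / 2) *
          ((1 + ‖y‖ ^ 2) ^ (-((N : ℝ) - 2))) *
        (t ^ 2 * Real.log (t ^ 2)
          + t ^ 2 * (Real.log (((N : ℝ) * ((N : ℝ) - 2)) ^ (((N : ℝ) - 2) / 2))
              - ((N : ℝ) - 2) * Real.log (1 + ‖y‖ ^ 2))
          + ((N : ℝ) - 2) * |Real.log ε| * t ^ 2) := by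
  have h2 : (5:ℝ) ≤ (N:ℝ) := by exact_mod_cast hN
  have h1y : (0:ℝ) < 1 + ‖y‖ ^ 2 := by positivity
  have hw : (0:ℝ) < (1 + ‖y‖ ^ 2) ^ (-((N : ℝ) - 2)) := Real.rpow_pos_of_pos h1y _
  have hK : (0:ℝ) < ((N : ℝ) * ((N : ℝ) - 2)) ^ (((N : ℝ) - 2) / 2) :=
    Real.rpow_pos_of_pos (by nlinarith) _
  have hb := aux_bubble_pos N hN hε0 (ε • y)
  have hεm : (0:ℝ) < ε ^ (N - 2) := pow_pos hε0 _
  have hb2 := aux_bubble_sq N hN hε0 y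
  rcases eq_or_lt_of_le ht with h0 | h0
  · rw [← h0]; simp
  · have hLabs : |Real.log ε| = -Real.log ε :=
      abs_of_nonpos (Real.log_nonpos hε0.le hε1.le)
    rw [hLabs]
    have hmp : ((N - 2 : ℕ) : ℝ) = (N:ℝ) - 2 := by
      push_cast [Nat.cast_sub (by omega : 2 ≤ N)]; ring
    have ht2 : (0:ℝ) < t ^ 2 := by positivity
    have hb2pos : (0:ℝ) < (bubble N ε (ε • y)) ^ 2 := by positivity
    have hlogw : Real.log ((1 + ‖y‖ ^ 2) ^ (-((N : ℝ) - 2)))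
        = -((N:ℝ) - 2) * Real.log (1 + ‖y‖ ^ 2) := by
      rw [Real.log_rpow h1y]
    have hlogb : Real.log ((bubble N ε (ε • y)) ^ 2)
        = Real.log (((N : ℝ) * ((N : ℝ) - 2)) ^ (((N : ℝ) - 2) / 2))
          + ((N:ℝ) - 2) * (-Real.log ε) + -((N:ℝ) - 2) * Real.log (1 + ‖y‖ ^ 2) := by
      rw [hb2, Real.log_mul (by positivity) hw.ne', Real.log_mul hK.ne' (by positivity),
        Real.log_inv, Real.log_pow, hmp, hlogw]
      ring
    have hlogψ : Real.log ((t * bubble N ε (ε • y)) ^ 2)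
        = Real.log (t ^ 2) + (Real.log (((N : ℝ) * ((N : ℝ) - 2)) ^ (((N : ℝ) - 2) / 2))
            + ((N:ℝ) - 2) * (-Real.log ε) + -((N:ℝ) - 2) * Real.log (1 + ‖y‖ ^ 2)) := by
      rw [mul_pow, Real.log_mul ht2.ne' hb2pos.ne', hlogb]
    rw [hlogψ, mul_pow, hb2]
    field_simp
    ring

/-- The elementary estimate used for the domination. -/
lemma aux_est {K W lg Q p L c0 t A : ℝ} (hK : 0 < K) (hW : 0 < W) (hlg : 0 ≤ lg)
    (hp : 0 < p) (hL : 0 ≤ L) (ht0 : 0 ≤ t) (ht1 : t ≤ 1)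
    (hA : |A| ≤ 1) (hQ : 0 ≤ Q) (hc0 : 0 ≤ c0)
    (hcase : t = 1 ∨ L * W ≤ c0 * Q) :
    |K * W * (A + t ^ 2 * (Real.log K - p * lg) + p * L * (t ^ 2 - 1))|
      ≤ K * ((1 + |Real.log K| + p * lg) * W + p * c0 * Q) := by
  have ht2 : t ^ 2 ≤ 1 := by nlinarith
  have ht2' : 0 ≤ t ^ 2 := sq_nonneg t
  have h2 : |t ^ 2 * (Real.log K - p * lg)| ≤ |Real.log K| + p * lg := by
    rw [abs_mul, abs_of_nonneg ht2']
    have : |Real.log K - p * lg| ≤ |Real.log K| + p * lg := by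
      refine (abs_sub _ _).trans ?_
      rw [abs_of_nonneg (by positivity : (0:ℝ) ≤ p * lg)]
    nlinarith [abs_nonneg (Real.log K - p * lg)]
  have h3 : |p * L * (t ^ 2 - 1)| = p * L * (1 - t ^ 2) := by
    rw [abs_mul, abs_of_nonneg (by positivity : (0:ℝ) ≤ p * L),
      abs_of_nonpos (by linarith : t ^ 2 - 1 ≤ 0)]
    ring
  have hS : |A + t ^ 2 * (Real.log K - p * lg) + p * L * (t ^ 2 - 1)|
      ≤ (1 + |Real.log K| + p * lg) + p * L * (1 - t ^ 2) := by
    calc |A + t ^ 2 * (Real.log K - p * lg) + p * L * (t ^ 2 - 1)|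
        ≤ |A + t ^ 2 * (Real.log K - p * lg)| + |p * L * (t ^ 2 - 1)| := abs_add_le _ _
      _ ≤ |A| + |t ^ 2 * (Real.log K - p * lg)| + |p * L * (t ^ 2 - 1)| := by
          linarith [abs_add_le A (t ^ 2 * (Real.log K - p * lg))]
      _ ≤ (1 + |Real.log K| + p * lg) + p * L * (1 - t ^ 2) := by
          rw [h3]; linarith
  have hlast : W * (p * L * (1 - t ^ 2)) ≤ p * c0 * Q := by
    rcases hcase with rfl | hc
    · have : (1:ℝ) ^ 2 - 1 = 0 := by norm_num
      rw [show (1:ℝ) - 1 ^ 2 = 0 by norm_num]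
      rw [mul_zero, mul_zero]
      positivity
    · have h1t : 1 - t ^ 2 ≤ 1 := by nlinarith
      have h4 : p * L * W * (1 - t ^ 2) ≤ p * L * W * 1 :=
        mul_le_mul_of_nonneg_left h1t (by positivity)
      calc W * (p * L * (1 - t ^ 2)) = p * L * W * (1 - t ^ 2) := by ring
        _ ≤ p * (L * W) := by linarith
        _ ≤ p * (c0 * Q) := mul_le_mul_of_nonneg_left hc hp.le
        _ = p * c0 * Q := by ring
  calc |K * W * (A + t ^ 2 * (Real.log K - p * lg) + p * L * (t ^ 2 - 1))|
      = K * W * |A + t ^ 2 * (Real.log K - p * lg) + p * L * (t ^ 2 - 1)| := by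
        rw [abs_mul, abs_of_nonneg (by positivity : (0:ℝ) ≤ K * W)]
    _ ≤ K * W * ((1 + |Real.log K| + p * lg) + p * L * (1 - t ^ 2)) := by
        apply mul_le_mul_of_nonneg_left hS (by positivity)
    _ = K * ((1 + |Real.log K| + p * lg) * W) + K * (W * (p * L * (1 - t ^ 2))) := by ring
    _ ≤ K * ((1 + |Real.log K| + p * lg) * W) + K * (p * c0 * Q) := by
        nlinarith [hlast]
    _ = K * ((1 + |Real.log K| + p * lg) * W + p * c0 * Q) := by ring

/-- For `N ≥ 5` and the truncated bubble `ψ_ε = ξ U_ε`, one has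
`∫ ψ_ε² log ψ_ε² = C₁ ε² |log ε| + O(ε²)` as `ε → 0⁺` for some constant `C₁ > 0`. -/
theorem stmt_12 (N : ℕ) (hN : 5 ≤ N) (ρ : ℝ) (hρ : 0 < ρ)
    (ξ : EuclideanSpace ℝ (Fin N) → ℝ) (hξ : ContDiff ℝ (⊤ : ℕ∞) ξ)
    (hξ1 : ∀ x, ‖x‖ ≤ ρ → ξ x = 1) (hξ0 : ∀ x, 2 * ρ ≤ ‖x‖ → ξ x = 0)
    (hξb : ∀ x, 0 ≤ ξ x ∧ ξ x ≤ 1) :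
    ∃ C₁ : ℝ, 0 < C₁ ∧
      (fun ε : ℝ =>
          (∫ x : EuclideanSpace ℝ (Fin N),
            (ξ x * bubble N ε x) ^ 2 * Real.log ((ξ x * bubble N ε x) ^ 2))
            - C₁ * ε ^ 2 * |Real.log ε|)
        =O[𝓝[>] (0 : ℝ)] (fun ε : ℝ => ε ^ 2) := by
  have hNR : (5:ℝ) ≤ (N:ℝ) := by exact_mod_cast hN
  obtain ⟨p, hp_def⟩ : ∃ p : ℝ, p = (N:ℝ) - 2 := ⟨_, rfl⟩
  have hp3 : (3:ℝ) ≤ p := by rw [hp_def]; linarith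
  have hp : 0 < p := by linarith
  obtain ⟨K, hK_def⟩ : ∃ K : ℝ, K = ((N:ℝ) * ((N:ℝ) - 2)) ^ (((N:ℝ) - 2)/2) := ⟨_, rfl⟩
  have hK : 0 < K := by rw [hK_def]; exact Real.rpow_pos_of_pos (by nlinarith) _
  have h1y : ∀ y : EuclideanSpace ℝ (Fin N), (0:ℝ) < 1 + ‖y‖ ^ 2 := fun y => by positivity
  obtain ⟨w, hw_def⟩ : ∃ w : EuclideanSpace ℝ (Fin N) → ℝ,
      w = fun y => (1 + ‖y‖ ^ 2) ^ (-p) := ⟨_, rfl⟩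
  have hw_pos : ∀ y, 0 < w y := fun y => by
    simp only [hw_def]; exact Real.rpow_pos_of_pos (h1y y) _
  have hw_int : Integrable w := by
    rw [hw_def]; exact aux_integrable N (by rw [hp_def]; linarith)
  have hq_int : Integrable
      (fun y : EuclideanSpace ℝ (Fin N) => (1 + ‖y‖ ^ 2) ^ (-(p - 4⁻¹))) :=
    aux_integrable N (by rw [hp_def]; linarith)
  have hq_pos : ∀ y : EuclideanSpace ℝ (Fin N), (0:ℝ) < (1 + ‖y‖ ^ 2) ^ (-(p - 4⁻¹)) :=
    fun y => Real.rpow_pos_of_pos (h1y y) _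
  have hlog_nonneg : ∀ y : EuclideanSpace ℝ (Fin N), 0 ≤ Real.log (1 + ‖y‖ ^ 2) :=
    fun y => Real.log_nonneg (by nlinarith [sq_nonneg ‖y‖])
  have hwlog_le : ∀ y : EuclideanSpace ℝ (Fin N),
      w y * Real.log (1 + ‖y‖ ^ 2) ≤ 4 * (1 + ‖y‖ ^ 2) ^ (-(p - 4⁻¹)) := by
    intro y
    have h4 : Real.log (1 + ‖y‖ ^ 2) ≤ 4 * (1 + ‖y‖ ^ 2) ^ ((4:ℝ)⁻¹) := by
      have := aux_log_le_rpow (h1y y) (by norm_num : (0:ℝ) < 4⁻¹)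
      simpa using this
    calc w y * Real.log (1 + ‖y‖ ^ 2)
        ≤ w y * (4 * (1 + ‖y‖ ^ 2) ^ ((4:ℝ)⁻¹)) :=
          mul_le_mul_of_nonneg_left h4 (hw_pos y).le
      _ = 4 * ((1 + ‖y‖ ^ 2) ^ (-p) * (1 + ‖y‖ ^ 2) ^ ((4:ℝ)⁻¹)) := by
          simp only [hw_def]; ring
      _ = 4 * (1 + ‖y‖ ^ 2) ^ (-(p - 4⁻¹)) := by
          rw [← Real.rpow_add (h1y y)]; ring_nf
  have hwlog_cont : Continuous (fun y : EuclideanSpace ℝ (Fin N) =>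
      w y * Real.log (1 + ‖y‖ ^ 2)) := by
    have hc : Continuous (fun y : EuclideanSpace ℝ (Fin N) => 1 + ‖y‖ ^ 2) :=
      continuous_const.add (continuous_norm.pow 2)
    rw [hw_def]
    exact ((hc.rpow_const (fun y => Or.inl (h1y y).ne')).mul
      (hc.log (fun y => (h1y y).ne')))
  have hwlog_int : Integrable (fun y : EuclideanSpace ℝ (Fin N) =>
      w y * Real.log (1 + ‖y‖ ^ 2)) := by
    refine (hq_int.const_mul 4).mono' hwlog_cont.aestronglyMeasurable
      (Eventually.of_forall fun y => ?_)
    rw [Real.norm_eq_abs, abs_of_nonneg (mul_nonneg (hw_pos y).le (hlog_nonneg y))]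
    exact hwlog_le y
  obtain ⟨J, hJ_def⟩ : ∃ J : ℝ, J = ∫ y, w y := ⟨_, rfl⟩
  have hJ : 0 < J := by
    rw [hJ_def, integral_pos_iff_support_of_nonneg (fun y => (hw_pos y).le) hw_int]
    refine lt_of_lt_of_le
      (Metric.measure_ball_pos volume (0 : EuclideanSpace ℝ (Fin N)) one_pos)
      (measure_mono fun y _ => (hw_pos y).ne')
  obtain ⟨c0, hc0_def⟩ : ∃ c0 : ℝ, c0 = 2 / ρ ^ ((2:ℝ)⁻¹) := ⟨_, rfl⟩
  have hc0 : 0 ≤ c0 := by rw [hc0_def]; positivity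
  obtain ⟨h, hh_def⟩ : ∃ h : EuclideanSpace ℝ (Fin N) → ℝ, h = fun y =>
      K * ((1 + |Real.log K| + p * Real.log (1 + ‖y‖ ^ 2)) * w y
        + p * c0 * (1 + ‖y‖ ^ 2) ^ (-(p - 4⁻¹))) := ⟨_, rfl⟩
  have hh_int : Integrable h := by
    have big := (((hw_int.const_mul (1 + |Real.log K|)).add
      (hwlog_int.const_mul p)).add (hq_int.const_mul (p * c0))).const_mul K
    refine big.congr (Eventually.of_forall fun y => ?_)
    simp only [hh_def, Pi.add_apply]
    ring
  refine ⟨K * p * J, by positivity, ?_⟩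
  rw [Asymptotics.isBigO_iff]
  refine ⟨∫ y, h y, ?_⟩
  filter_upwards [Ioo_mem_nhdsGT_of_mem
    (show (0:ℝ) ∈ Set.Ico (0:ℝ) 1 by norm_num)] with ε hε
  obtain ⟨hε0, hε1⟩ := hε
  obtain ⟨F, hF_def⟩ : ∃ F : EuclideanSpace ℝ (Fin N) → ℝ, F = fun x =>
      (ξ x * bubble N ε x) ^ 2 * Real.log ((ξ x * bubble N ε x) ^ 2) := ⟨_, rfl⟩
  rw [← hF_def]
  -- continuity, compact support, integrability of F
  have hden_pos : ∀ x : EuclideanSpace ℝ (Fin N), (0:ℝ) < ε ^ 2 + ‖x‖ ^ 2 :=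
    fun x => add_pos_of_pos_of_nonneg (pow_pos hε0 2) (by positivity)
  have hb_cont : Continuous (bubble N ε) := by
    unfold bubble
    refine Continuous.div continuous_const
      ((continuous_const.add (continuous_norm.pow 2)).rpow_const
        (fun x => Or.inl (hden_pos x).ne')) ?_
    exact fun x => (Real.rpow_pos_of_pos (hden_pos x) _).ne'
  have hF_cont : Continuous F := by
    rw [hF_def]
    exact Real.continuous_mul_log.comp (((hξ.continuous).mul hb_cont).pow 2)
  have hF_supp : HasCompactSupport F := by
    refine HasCompactSupport.intro
      (isCompact_closedBall (0 : EuclideanSpace ℝ (Fin N)) (2*ρ)) fun x hx => ?_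
    have hx' : 2 * ρ ≤ ‖x‖ := by
      have h1 := Metric.mem_closedBall.not.mp hx
      rw [dist_zero_right] at h1
      linarith [lt_of_not_ge h1]
    simp [hF_def, hξ0 x hx']
  have hF_int : Integrable F := hF_cont.integrable_of_hasCompactSupport hF_supp
  have hCV : ∫ y, F (ε • y) = (ε ^ N)⁻¹ * ∫ x, F x := by
    rw [MeasureTheory.Measure.integral_comp_smul volume F ε, finrank_euclideanSpace_fin,
      abs_of_nonneg (by positivity)]
    simp [smul_eq_mul]
  have hFε_int : Integrable (fun y => F (ε • y)) := hF_int.comp_smul hε0.ne'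
  -- pointwise identity
  have hg_eq : ∀ y, ε ^ (N - 2) * F (ε • y) - K * p * |Real.log ε| * w y
      = K * w y * ((ξ (ε • y)) ^ 2 * Real.log ((ξ (ε • y)) ^ 2)
        + (ξ (ε • y)) ^ 2 * (Real.log K - p * Real.log (1 + ‖y‖ ^ 2))
        + p * |Real.log ε| * ((ξ (ε • y)) ^ 2 - 1)) := by
    intro y
    have hpw := aux_pointwise N hN hε0 hε1 (hξb (ε • y)).1 y
    simp only [hF_def, hw_def, hK_def, hp_def]
    rw [hpw]
    ring
  -- integrability of the two pieces
  have hgint1 : Integrable (fun y => ε ^ (N - 2) * F (ε • y)) := hFε_int.const_mul _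
  have hgint2 : Integrable (fun y => K * p * |Real.log ε| * w y) := hw_int.const_mul _
  -- key algebraic identity for the integrals
  have hkey : (∫ x, F x) - K * p * J * ε ^ 2 * |Real.log ε|
      = ε ^ 2 * ∫ y, (ε ^ (N - 2) * F (ε • y) - K * p * |Real.log ε| * w y) := by
    rw [integral_sub hgint1 hgint2, integral_const_mul, integral_const_mul, ← hJ_def, hCV]
    have hεN : ε ^ (2:ℕ) * ε ^ (N - 2) = ε ^ N := by
      rw [← pow_add]; congr 1; omega
    rw [← hεN]
    field_simp
  -- pointwise bound
  have hbd : ∀ y, |ε ^ (N - 2) * F (ε • y) - K * p * |Real.log ε| * w y| ≤ h y := by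
    intro y
    rw [hg_eq y]
    simp only [hh_def]
    refine aux_est hK (hw_pos y) (hlog_nonneg y) hp (abs_nonneg _) (hξb _).1 (hξb _).2
      (aux_abs_mul_log_le_one (sq_nonneg _)
        (by nlinarith [(hξb (ε • y)).1, (hξb (ε • y)).2]))
      (hq_pos y).le hc0 ?_
    rcases le_or_gt (ε * ‖y‖) ρ with hcase | hcase
    · left
      apply hξ1
      rw [norm_smul, Real.norm_eq_abs, abs_of_pos hε0]
      exact hcase
    · right
      have hy0 : 0 < ‖y‖ := by
        nlinarith [norm_nonneg y, mul_nonneg (sub_nonneg.2 hε1.le) (norm_nonneg y)]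
      have hLle : |Real.log ε| ≤ c0 * (1 + ‖y‖ ^ 2) ^ ((4:ℝ)⁻¹) := by
        have h1 : |Real.log ε| = -Real.log ε :=
          abs_of_nonpos (Real.log_nonpos hε0.le hε1.le)
        have h2 : ρ / ‖y‖ ≤ ε := by rw [div_le_iff₀ hy0]; nlinarith
        have h3 : Real.log (ρ / ‖y‖) ≤ Real.log ε :=
          Real.log_le_log (div_pos hρ hy0) h2
        have h4 : -Real.log ε ≤ Real.log (‖y‖ / ρ) := by
          have : Real.log (‖y‖ / ρ) = -Real.log (ρ / ‖y‖) := by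
            rw [← Real.log_inv, inv_div]
          linarith [this]
        have h5 : Real.log (‖y‖ / ρ) ≤ 2 * (‖y‖ / ρ) ^ ((2:ℝ)⁻¹) := by
          have := aux_log_le_rpow (div_pos hy0 hρ) (show (0:ℝ) < 2⁻¹ by norm_num)
          simpa using this
        have h6 : (‖y‖ / ρ) ^ ((2:ℝ)⁻¹) = ‖y‖ ^ ((2:ℝ)⁻¹) / ρ ^ ((2:ℝ)⁻¹) :=
          Real.div_rpow (norm_nonneg y) hρ.le _
        have h7 : ‖y‖ ^ ((2:ℝ)⁻¹) ≤ (1 + ‖y‖ ^ 2) ^ ((4:ℝ)⁻¹) := by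
          have e : ‖y‖ ^ ((2:ℝ)⁻¹) = (‖y‖ ^ 2) ^ ((4:ℝ)⁻¹) := by
            rw [← Real.rpow_natCast ‖y‖ 2, ← Real.rpow_mul (norm_nonneg y)]
            norm_num
          rw [e]
          exact Real.rpow_le_rpow (sq_nonneg _) (by linarith) (by norm_num)
        have hρr : (0:ℝ) < ρ ^ ((2:ℝ)⁻¹) := Real.rpow_pos_of_pos hρ _
        rw [h1, hc0_def]
        calc -Real.log ε ≤ Real.log (‖y‖ / ρ) := h4
          _ ≤ 2 * (‖y‖ / ρ) ^ ((2:ℝ)⁻¹) := h5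
          _ = 2 * (‖y‖ ^ ((2:ℝ)⁻¹) / ρ ^ ((2:ℝ)⁻¹)) := by rw [h6]
          _ ≤ 2 * ((1 + ‖y‖ ^ 2) ^ ((4:ℝ)⁻¹) / ρ ^ ((2:ℝ)⁻¹)) := by gcongr
          _ = 2 / ρ ^ ((2:ℝ)⁻¹) * (1 + ‖y‖ ^ 2) ^ ((4:ℝ)⁻¹) := by ring
      have h8 : |Real.log ε| * w y ≤ (c0 * (1 + ‖y‖ ^ 2) ^ ((4:ℝ)⁻¹)) * w y :=
        mul_le_mul_of_nonneg_right hLle (hw_pos y).le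
      have h9 : (c0 * (1 + ‖y‖ ^ 2) ^ ((4:ℝ)⁻¹)) * w y
          = c0 * (1 + ‖y‖ ^ 2) ^ (-(p - 4⁻¹)) := by
        simp only [hw_def]
        rw [mul_assoc, ← Real.rpow_add (h1y y)]
        ring_nf
      rw [h9] at h8
      exact h8
  -- conclusion
  have hint_le : |∫ y, (ε ^ (N - 2) * F (ε • y) - K * p * |Real.log ε| * w y)| ≤ ∫ y, h y := by
    have := norm_integral_le_of_norm_le hh_int
      (Eventually.of_forall fun y => by
        rw [Real.norm_eq_abs]; exact hbd y)
    simpa [Real.norm_eq_abs] using this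
  rw [hkey, Real.norm_eq_abs, Real.norm_eq_abs, abs_mul, abs_pow, abs_of_pos hε0]
  calc ε ^ 2 * |∫ y, (ε ^ (N - 2) * F (ε • y) - K * p * |Real.log ε| * w y)|
      ≤ ε ^ 2 * ∫ y, h y := mul_le_mul_of_nonneg_left hint_le (by positivity)
    _ = (∫ y, h y) * ε ^ 2 := by ring
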